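/- Let n ≥ 2 and let G ⊊ ℝⁿ be a domain. Define, for x,y ∈ G, \bar{v}_G(x,y) = sup_{z,w ∈ ∂G} arccos( (1/2)·( |x−z||y−w|/(|y−z||x−w|) + |y−z||x−w|/(|x−z||y−w|) − |x−y|²|z−w|²/(|x−z||x−w||y−z||y−w|) ) ). Then \bar{v}_G satisfies the triangle inequality: \bar{v}_G(x,y) ≤ \bar{v}_G(x,z) + \bar{v}_G(z,y) for all x,y,z ∈ G. -/
import Mathlib


open EuclideanGeometry Real Set

section AngleTriangle

variable {V : Type*} [NormedAddCommGroup V] [InnerProductSpace ℝ V]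

local notation "⟪" x ", " y "⟫" => @inner ℝ _ _ x y

private lemma innerCS (u v w : V) :
    ⟪u, v⟫ * ⟪v, w⟫ - ⟪u, w⟫ * ⟪v, v⟫ ≤
      Real.sqrt ((⟪u, u⟫ * ⟪v, v⟫ - ⟪u, v⟫ * ⟪u, v⟫) * (⟪v, v⟫ * ⟪w, w⟫ - ⟪v, w⟫ * ⟪v, w⟫)) := by
  rcases eq_or_ne v 0 with rfl | hv
  · simp [Real.sqrt_nonneg]
  have hvv : (0:ℝ) < ⟪v, v⟫ := real_inner_self_eq_norm_sq v ▸ pow_pos (norm_pos_iff.2 hv) 2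
  set u' : V := ⟪v, v⟫ • u - ⟪u, v⟫ • v with hu'
  set w' : V := ⟪v, v⟫ • w - ⟪v, w⟫ • v with hw'
  have h1 : -⟪u', w'⟫ ≤ ‖u'‖ * ‖w'‖ := by
    have := abs_real_inner_le_norm u' w'
    have := neg_abs_le (⟪u', w'⟫ : ℝ)
    linarith
  have h2 : ⟪u', w'⟫ = ⟪v, v⟫ * (⟪v, v⟫ * ⟪u, w⟫ - ⟪u, v⟫ * ⟪v, w⟫) := by
    simp only [hu', hw', inner_sub_left, inner_sub_right, real_inner_smul_left,
      real_inner_smul_right]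
    rw [real_inner_comm v u, real_inner_comm w v]
    ring
  have h3 : ⟪u', u'⟫ = ⟪v, v⟫ * (⟪u, u⟫ * ⟪v, v⟫ - ⟪u, v⟫ * ⟪u, v⟫) := by
    simp only [hu', inner_sub_left, inner_sub_right, real_inner_smul_left,
      real_inner_smul_right]
    rw [real_inner_comm v u]
    ring
  have h4 : ⟪w', w'⟫ = ⟪v, v⟫ * (⟪v, v⟫ * ⟪w, w⟫ - ⟪v, w⟫ * ⟪v, w⟫) := by
    simp only [hw', inner_sub_left, inner_sub_right, real_inner_smul_left,
      real_inner_smul_right]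
    rw [real_inner_comm w v]
    ring
  have h5 : ‖u'‖ * ‖w'‖ = Real.sqrt (⟪u', u'⟫ * ⟪w', w'⟫) := by
    rw [Real.sqrt_mul (real_inner_self_nonneg), real_inner_self_eq_norm_sq,
      real_inner_self_eq_norm_sq, Real.sqrt_sq (norm_nonneg _), Real.sqrt_sq (norm_nonneg _)]
  have h6 : ⟪u', u'⟫ * ⟪w', w'⟫ = ⟪v, v⟫ ^ 2 *
      ((⟪u, u⟫ * ⟪v, v⟫ - ⟪u, v⟫ * ⟪u, v⟫) * (⟪v, v⟫ * ⟪w, w⟫ - ⟪v, w⟫ * ⟪v, w⟫)) := by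
    rw [h3, h4]; ring
  have h7 : ‖u'‖ * ‖w'‖ = ⟪v, v⟫ *
      Real.sqrt ((⟪u, u⟫ * ⟪v, v⟫ - ⟪u, v⟫ * ⟪u, v⟫) * (⟪v, v⟫ * ⟪w, w⟫ - ⟪v, w⟫ * ⟪v, w⟫)) := by
    rw [h5, h6, Real.sqrt_mul (sq_nonneg _), Real.sqrt_sq hvv.le]
  rw [h2, h7] at h1
  have h8 : ⟪v, v⟫ * (⟪u, v⟫ * ⟪v, w⟫ - ⟪u, w⟫ * ⟪v, v⟫) ≤ ⟪v, v⟫ *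
      Real.sqrt ((⟪u, u⟫ * ⟪v, v⟫ - ⟪u, v⟫ * ⟪u, v⟫) * (⟪v, v⟫ * ⟪w, w⟫ - ⟪v, w⟫ * ⟪v, w⟫)) := by
    nlinarith [h1]
  exact le_of_mul_le_mul_left h8 hvv

private lemma angle_triangle_vec (u v w : V) :
    InnerProductGeometry.angle u w ≤
      InnerProductGeometry.angle u v + InnerProductGeometry.angle v w := by
  rcases eq_or_ne u 0 with rfl | hu
  · rw [InnerProductGeometry.angle_zero_left, InnerProductGeometry.angle_zero_left]
    linarith [InnerProductGeometry.angle_nonneg v w]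
  rcases eq_or_ne v 0 with rfl | hv
  · rw [InnerProductGeometry.angle_zero_left, InnerProductGeometry.angle_zero_right]
    linarith [InnerProductGeometry.angle_le_pi u w]
  rcases eq_or_ne w 0 with rfl | hw
  · rw [InnerProductGeometry.angle_zero_right, InnerProductGeometry.angle_zero_right]
    linarith [InnerProductGeometry.angle_nonneg u v]
  set A := InnerProductGeometry.angle u v with hA
  set B := InnerProductGeometry.angle v w with hB
  by_cases hsum : π ≤ A + B
  · linarith [InnerProductGeometry.angle_le_pi u w]
  push_neg at hsum
  have hu' := norm_pos_iff.2 hu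
  have hv' := norm_pos_iff.2 hv
  have hw' := norm_pos_iff.2 hw
  have hN : (0:ℝ) < ‖u‖ * ‖v‖ * (‖v‖ * ‖w‖) := by positivity
  have key : Real.cos (A + B) * (‖u‖ * ‖v‖ * (‖v‖ * ‖w‖)) ≤
      Real.cos (InnerProductGeometry.angle u w) * (‖u‖ * ‖v‖ * (‖v‖ * ‖w‖)) := by
    have e1 : Real.cos (A + B) * (‖u‖ * ‖v‖ * (‖v‖ * ‖w‖)) =
        (Real.cos A * (‖u‖ * ‖v‖)) * (Real.cos B * (‖v‖ * ‖w‖)) -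
          (Real.sin A * (‖u‖ * ‖v‖)) * (Real.sin B * (‖v‖ * ‖w‖)) := by
      rw [Real.cos_add]; ring
    rw [e1, hA, hB, InnerProductGeometry.cos_angle_mul_norm_mul_norm,
      InnerProductGeometry.cos_angle_mul_norm_mul_norm,
      InnerProductGeometry.sin_angle_mul_norm_mul_norm,
      InnerProductGeometry.sin_angle_mul_norm_mul_norm]
    have e2 : Real.cos (InnerProductGeometry.angle u w) * (‖u‖ * ‖v‖ * (‖v‖ * ‖w‖)) =
        ⟪u, w⟫ * ⟪v, v⟫ := by
      have := InnerProductGeometry.cos_angle_mul_norm_mul_norm u w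
      rw [real_inner_self_eq_norm_mul_norm]
      nlinarith [this]
    rw [e2, ← Real.sqrt_mul (by nlinarith [real_inner_mul_inner_self_le u v])]
    linarith [innerCS u v w]
  have hcos : Real.cos (A + B) ≤ Real.cos (InnerProductGeometry.angle u w) :=
    le_of_mul_le_mul_right key hN
  by_contra hcon
  push_neg at hcon
  have := Real.strictAntiOn_cos
    ⟨add_nonneg (InnerProductGeometry.angle_nonneg u v) (InnerProductGeometry.angle_nonneg v w),
      hsum.le⟩
    ⟨InnerProductGeometry.angle_nonneg u w, InnerProductGeometry.angle_le_pi u w⟩ hcon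
  linarith

end AngleTriangle

private lemma angle_triangle_pt {n : ℕ} (a b c o : EuclideanSpace ℝ (Fin n)) :
    ∠ a o c ≤ ∠ a o b + ∠ b o c := by
  simp only [EuclideanGeometry.angle]
  exact angle_triangle_vec (a -ᵥ o) (b -ᵥ o) (c -ᵥ o)

set_option maxHeartbeats 1000000 in
private lemma arccos_eq_angle {n : ℕ} (x y z w : EuclideanSpace ℝ (Fin n))
    (hxz : x ≠ z) (hyz : y ≠ z) (hxw : x ≠ w) (hyw : y ≠ w) (hwz : w ≠ z) :
    Real.arccos ((dist x z * dist y w / (dist y z * dist x w) +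
          dist y z * dist x w / (dist x z * dist y w) -
          dist x y ^ 2 * dist z w ^ 2 /
            (dist x z * dist x w * dist y z * dist y w)) / 2) =
    ∠ (inversion z 1 x) (inversion z 1 w) (inversion z 1 y) := by
  have dxz : 0 < dist x z := dist_pos.2 hxz
  have dyz : 0 < dist y z := dist_pos.2 hyz
  have dxw : 0 < dist x w := dist_pos.2 hxw
  have dyw : 0 < dist y w := dist_pos.2 hyw
  have dwz : 0 < dist w z := dist_pos.2 hwz
  have hA : dist (inversion z 1 x) (inversion z 1 w) =
      1 / (dist x z * dist w z) * dist x w := by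
    simpa using dist_inversion_inversion hxz hwz 1
  have hB : dist (inversion z 1 w) (inversion z 1 y) =
      1 / (dist w z * dist y z) * dist w y := by
    simpa using dist_inversion_inversion hwz hyz 1
  have hC : dist (inversion z 1 x) (inversion z 1 y) =
      1 / (dist x z * dist y z) * dist x y := by
    simpa using dist_inversion_inversion hxz hyz 1
  set a := dist (inversion z 1 x) (inversion z 1 w) with ha
  set b := dist (inversion z 1 w) (inversion z 1 y) with hb
  set c := dist (inversion z 1 x) (inversion z 1 y) with hc
  have ha0 : 0 < a := by rw [hA]; exact mul_pos (div_pos one_pos (mul_pos dxz dwz)) dxw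
  have hb0 : 0 < b := by
    rw [hB]
    exact mul_pos (div_pos one_pos (mul_pos dwz dyz)) (dist_pos.2 (Ne.symm hyw))
  have law := EuclideanGeometry.law_cos (inversion z 1 x) (inversion z 1 w) (inversion z 1 y)
  rw [dist_comm (inversion z 1 y) (inversion z 1 w), ← ha, ← hb, ← hc] at law
  have hcos : Real.cos (∠ (inversion z 1 x) (inversion z 1 w) (inversion z 1 y)) =
      (a ^ 2 + b ^ 2 - c ^ 2) / (2 * a * b) := by
    rw [eq_div_iff (by positivity)]
    linear_combination law
  have hexpr : (dist x z * dist y w / (dist y z * dist x w) +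
          dist y z * dist x w / (dist x z * dist y w) -
          dist x y ^ 2 * dist z w ^ 2 /
            (dist x z * dist x w * dist y z * dist y w)) / 2 =
      (a ^ 2 + b ^ 2 - c ^ 2) / (2 * a * b) := by
    rw [hA, hB, hC, dist_comm w y, dist_comm w z]
    have dzw : 0 < dist z w := by rwa [dist_comm] at dwz
    field_simp
    ring
  rw [hexpr, ← hcos, Real.arccos_cos (EuclideanGeometry.angle_nonneg _ _ _)
    (EuclideanGeometry.angle_le_pi _ _ _)]

/-- The visual double angle metric on a domain `G ⊊ ℝⁿ`:
`\bar v_G(x,y) = sup_{z,w ∈ ∂G} arccos((1/2)(|x−z||y−w|/(|y−z||x−w|)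
  + |y−z||x−w|/(|x−z||y−w|) − |x−y|²|z−w|²/(|x−z||x−w||y−z||y−w|)))`. -/
noncomputable def visualDoubleAngle {n : ℕ} (G : Set (EuclideanSpace ℝ (Fin n)))
    (x y : EuclideanSpace ℝ (Fin n)) : ℝ :=
  sSup {r : ℝ | ∃ z ∈ frontier G, ∃ w ∈ frontier G,
    r = Real.arccos ((dist x z * dist y w / (dist y z * dist x w) +
          dist y z * dist x w / (dist x z * dist y w) -
          dist x y ^ 2 * dist z w ^ 2 /
            (dist x z * dist x w * dist y z * dist y w)) / 2)}

theorem stmt11 (n : ℕ) (hn : 2 ≤ n) (G : Set (EuclideanSpace ℝ (Fin n)))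
    (hGopen : IsOpen G) (hGconn : IsConnected G) (hGproper : G ≠ Set.univ) :
    ∀ x ∈ G, ∀ y ∈ G, ∀ z ∈ G,
      visualDoubleAngle G x y ≤ visualDoubleAngle G x z + visualDoubleAngle G z y := by
  have hfront : (frontier G).Nonempty := by
    rcases eq_empty_or_nonempty (frontier G) with h | h
    · have : IsClopen G := isClopen_iff_frontier_eq_empty.mpr h
      rcases (isClopen_iff.1 this) with h1 | h1
      · exact absurd h1 hGconn.nonempty.ne_empty
      · exact absurd h1 hGproper
    · exact h
  have hdisj : ∀ z ∈ frontier G, z ∉ G := by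
    intro z hz hzG
    have := hGopen.frontier_eq ▸ hz
    exact this.2 hzG
  have hbdd : ∀ x y : EuclideanSpace ℝ (Fin n), BddAbove {r : ℝ | ∃ z ∈ frontier G,
      ∃ w ∈ frontier G, r = Real.arccos ((dist x z * dist y w / (dist y z * dist x w) +
          dist y z * dist x w / (dist x z * dist y w) -
          dist x y ^ 2 * dist z w ^ 2 /
            (dist x z * dist x w * dist y z * dist y w)) / 2)} := by
    intro x y
    refine ⟨π, ?_⟩
    rintro r ⟨z, _, w, _, rfl⟩
    exact Real.arccos_le_pi _
  have hzero : ∀ x ∈ G, ∀ y ∈ G, (0:ℝ) ∈ {r : ℝ | ∃ z ∈ frontier G,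
      ∃ w ∈ frontier G, r = Real.arccos ((dist x z * dist y w / (dist y z * dist x w) +
          dist y z * dist x w / (dist x z * dist y w) -
          dist x y ^ 2 * dist z w ^ 2 /
            (dist x z * dist x w * dist y z * dist y w)) / 2)} := by
    intro x hx y hy
    obtain ⟨z₀, hz₀⟩ := hfront
    refine ⟨z₀, hz₀, z₀, hz₀, ?_⟩
    have hxz : dist x z₀ ≠ 0 := dist_ne_zero.2 (fun h => hdisj z₀ hz₀ (h ▸ hx))
    have hyz : dist y z₀ ≠ 0 := dist_ne_zero.2 (fun h => hdisj z₀ hz₀ (h ▸ hy))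
    rw [dist_self]
    have h1 : (dist x z₀ * dist y z₀ / (dist y z₀ * dist x z₀) +
        dist y z₀ * dist x z₀ / (dist x z₀ * dist y z₀) -
        dist x y ^ 2 * (0:ℝ) ^ 2 / (dist x z₀ * dist x z₀ * dist y z₀ * dist y z₀)) / 2 = 1 := by
      field_simp
      ring
    rw [h1, Real.arccos_one]
  have hnonneg : ∀ x ∈ G, ∀ y ∈ G, 0 ≤ visualDoubleAngle G x y := fun x hx y hy =>
    le_csSup (hbdd x y) (hzero x hx y hy)
  intro x hx y hy p hp
  rw [visualDoubleAngle]
  apply Real.sSup_le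
  · rintro r ⟨z, hz, w, hw, rfl⟩
    have hxz : x ≠ z := fun h => hdisj z hz (h ▸ hx)
    have hyz : y ≠ z := fun h => hdisj z hz (h ▸ hy)
    have hpz : p ≠ z := fun h => hdisj z hz (h ▸ hp)
    have hxw : x ≠ w := fun h => hdisj w hw (h ▸ hx)
    have hyw : y ≠ w := fun h => hdisj w hw (h ▸ hy)
    have hpw : p ≠ w := fun h => hdisj w hw (h ▸ hp)
    by_cases hwz : w = z
    · subst hwz
      have dxw : dist x w ≠ 0 := dist_ne_zero.2 hxw
      have dyw : dist y w ≠ 0 := dist_ne_zero.2 hyw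
      have h1 : (dist x w * dist y w / (dist y w * dist x w) +
          dist y w * dist x w / (dist x w * dist y w) -
          dist x y ^ 2 * dist w w ^ 2 /
            (dist x w * dist x w * dist y w * dist y w)) / 2 = 1 := by
        rw [dist_self]
        field_simp
        ring
      rw [h1, Real.arccos_one]
      exact add_nonneg (hnonneg x hx p hp) (hnonneg p hp y hy)
    · rw [arccos_eq_angle x y z w hxz hyz hxw hyw hwz]
      calc ∠ (inversion z 1 x) (inversion z 1 w) (inversion z 1 y)
          ≤ ∠ (inversion z 1 x) (inversion z 1 w) (inversion z 1 p) +
            ∠ (inversion z 1 p) (inversion z 1 w) (inversion z 1 y) :=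
            angle_triangle_pt _ _ _ _
        _ ≤ visualDoubleAngle G x p + visualDoubleAngle G p y := by
            apply add_le_add
            · exact le_csSup (hbdd x p)
                ⟨z, hz, w, hw, (arccos_eq_angle x p z w hxz hpz hxw hpw hwz).symm⟩
            · exact le_csSup (hbdd p y)
                ⟨z, hz, w, hw, (arccos_eq_angle p y z w hpz hyz hpw hyw hwz).symm⟩
  · exact add_nonneg (hnonneg x hx p hp) (hnonneg p hp y hy)
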